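/- arXiv:2302.02056 — 4 statements merged into one kernel-verified Lean document; each statement's English description precedes it below -/
import Mathlib

section
/- Let M^{xor}_ε denote the mechanism applying F_{1/2, 1/(2e^ε)} independently to each bit of a vector. Then for all x, y ∈ {0,1}, M^{xor}_{ε₁}(x) ⊕ M^{xor}_{ε₂}(y) has the same distribution as M^{xor}_{ε*}(x ∨ y), where ε* = −log(e^{−ε₁} + e^{−ε₂} − e^{−(ε₁+ε₂)}). -/
/-
Write a bit's law through its bias `1 - 2·P(1)`. Biases of independent bits multiply under xor,
and `F_{1/2, 1/(2e^ε)}` has bias `0` on input `1` and `1 - e^{-ε}` on input `0`. So the xor has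
bias `0` unless `x = y = 0`, where it is `(1 - e^{-ε₁})(1 - e^{-ε₂}) = 1 - e^{-ε*}`.
-/

open Real

/-- Bernoulli distribution on `Bool` with success probability `p`. -/
def bern (p : ℝ) : Bool → ℝ := fun b => if b then p else 1 - p

/-- Distribution of `op X Y` for independent `X ~ Bernoulli p`, `Y ~ Bernoulli q`. -/
def indepOp (p q : ℝ) (op : Bool → Bool → Bool) : Bool → ℝ :=
  fun b => ∑ x : Bool, ∑ y : Bool, if op x y = b then bern p x * bern q y else 0

/-- Output probability of a one-bit application of `M^xor_ε = F_{1/2, 1/(2e^ε)}` on input `x`: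
the probability the output bit is 1. -/
noncomputable def mxorParam (ε : ℝ) (x : Bool) : ℝ :=
  if x then 1 / 2 else 1 / (2 * Real.exp ε)

theorem indepOp_xor (p q : ℝ) :
    indepOp p q xor = bern ((1 - (1 - 2 * p) * (1 - 2 * q)) / 2) := by
  funext b
  cases b <;> simp [indepOp, bern] <;> ring

theorem one_sub_two_mul_mxorParam (ε : ℝ) (x : Bool) :
    1 - 2 * mxorParam ε x = if x then 0 else 1 - exp (-ε) := by
  cases x
  · simp only [mxorParam, Bool.false_eq_true, if_false, exp_neg]
    field_simp
  · norm_num [mxorParam]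

theorem exp_neg_add_exp_neg_sub_pos (ε₁ : ℝ) {ε₂ : ℝ} (h₂ : 0 < ε₂) :
    0 < exp (-ε₁) + exp (-ε₂) - exp (-(ε₁ + ε₂)) := by
  have hsplit : exp (-ε₁) + exp (-ε₂) - exp (-(ε₁ + ε₂)) =
      exp (-ε₁) * (1 - exp (-ε₂)) + exp (-ε₂) := by
    rw [neg_add, exp_add]; ring
  rw [hsplit]
  exact add_pos (mul_pos (exp_pos _) (sub_pos.mpr (exp_lt_one_iff.mpr (neg_neg_of_pos h₂))))
    (exp_pos _)

theorem one_sub_exp_neg_neg_log (ε₁ : ℝ) {ε₂ : ℝ} (h₂ : 0 < ε₂) :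
    1 - exp (-(-log (exp (-ε₁) + exp (-ε₂) - exp (-(ε₁ + ε₂))))) =
      (1 - exp (-ε₁)) * (1 - exp (-ε₂)) := by
  rw [neg_neg, exp_log (exp_neg_add_exp_neg_sub_pos ε₁ h₂), neg_add, exp_add]
  ring

theorem stmt4_general (ε₁ ε₂ : ℝ) (h₂ : 0 < ε₂) (x y : Bool) :
    indepOp (mxorParam ε₁ x) (mxorParam ε₂ y) xor =
      bern (mxorParam
        (-Real.log (Real.exp (-ε₁) + Real.exp (-ε₂) - Real.exp (-(ε₁ + ε₂)))) (x || y)) := by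
  set ε := -log (exp (-ε₁) + exp (-ε₂) - exp (-(ε₁ + ε₂)))
  have hbias : (1 - 2 * mxorParam ε₁ x) * (1 - 2 * mxorParam ε₂ y) =
      1 - 2 * mxorParam ε (x || y) := by
    simp only [one_sub_two_mul_mxorParam]
    cases x <;> cases y <;> simp only [Bool.or_false, Bool.or_true,
      Bool.false_eq_true, if_true, if_false, zero_mul, mul_zero]
    exact (one_sub_exp_neg_neg_log ε₁ h₂).symm
  rw [indepOp_xor, hbias]
  congr 1
  ring

theorem stmt4 (ε₁ ε₂ : ℝ) (h₁ : 0 < ε₁) (h₂ : 0 < ε₂) (x y : Bool) :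
    indepOp (mxorParam ε₁ x) (mxorParam ε₂ y) xor =
      bern (mxorParam
        (-Real.log (Real.exp (-ε₁) + Real.exp (-ε₂) - Real.exp (-(ε₁ + ε₂)))) (x || y)) :=
  stmt4_general ε₁ ε₂ h₂ x y
end

section
/- With the notation of the deterministic-merge theorem, it is impossible to have deterministic symmetric operations ∘ and • on {0,1}² such that simultaneously f₁(x) ∘ f₂(y) ≈ f₃(x ∨ y) and f₁(x) • f₂(y) ≈ f₃'(x ∧ y) in distribution for all x, y, where f₁, f₂ are finitely-DP randomized responses with f_i(0) ≠ f_i(1) in distribution (and likewise for f₃, f₃'). -/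
open Real

/-- One-bit output probability of `F_{p,q}` on input `x` (probability of outputting 1). -/
def rrParam (p q : ℝ) (x : Bool) : ℝ := if x then p else q

/-
Write `P(a, b)` for the probability that `op X Y = true` for independent `X ~ Bernoulli a`,
`Y ~ Bernoulli b`. It is bilinear, `P(a, b) = c₀₀ + (c₁₀ - c₀₀) a + (c₀₁ - c₀₀) b + δ a b`,
where `c_xy ∈ {0, 1}` is the value of `op x y` and `δ = c₁₁ - c₁₀ - c₀₁ + c₀₀`. An or-merge
gives `P(p₁, p₂) = P(p₁, q₂) = p₃`, so the slope `c₀₁ - c₀₀ + δ p₁` of `P(p₁, ·)` vanishes, and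
then `q₃ - p₃ = δ (q₁ - p₁) (q₂ - p₂)`, so `δ ≠ 0`. As `c₀₀ - c₀₁ ∈ {-1, 0, 1}` and
`δ ∈ {-2, …, 2}`, `p₁ = (c₀₀ - c₀₁) / δ` can lie in `(0, 1)` only as `1/2`. Negating both
inputs turns an and-merge into an or-merge with `p` and `q` exchanged, forcing `q₁ = 1/2` too.
-/

open Set

namespace MergeImpossibility

variable (op : Bool → Bool → Bool)

def opTable (x y : Bool) : ℝ := if op x y then 1 else 0

def opInteraction : ℝ :=
  opTable op true true - opTable op true false - opTable op false true + opTable op false false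

lemma indepOp_apply_true (a b : ℝ) :
    indepOp a b op true =
      opTable op false false + (opTable op true false - opTable op false false) * a
        + (opTable op false true - opTable op false false) * b + opInteraction op * a * b := by
  simp only [indepOp, bern, opTable, opInteraction, Fintype.sum_bool]
  cases op true true <;> cases op true false <;> cases op false true <;> cases op false false <;>
    simp only [Bool.false_eq_true, if_true, if_false] <;> ring

lemma indepOp_apply_true_sub_right (a b b' : ℝ) :
    indepOp a b op true - indepOp a b' op true =
      (opTable op false true - opTable op false false + opInteraction op * a) * (b - b') := by
  rw [indepOp_apply_true, indepOp_apply_true]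
  ring

lemma eq_half_of_opInteraction_ne_zero {a : ℝ} (ha : a ∈ Ioo (0 : ℝ) 1)
    (hδ : opInteraction op ≠ 0)
    (hslope : opTable op false true - opTable op false false + opInteraction op * a = 0) :
    a = 1 / 2 := by
  obtain ⟨ha₀, ha₁⟩ := ha
  simp only [opInteraction, opTable] at hδ hslope
  split_ifs at hδ hslope <;> norm_num at hδ <;> linarith

variable {op}

theorem eq_half_of_orMerge {p₁ q₁ p₂ q₂ p₃ q₃ : ℝ} (hp₁ : p₁ ∈ Ioo (0 : ℝ) 1)
    (hne₂ : p₂ ≠ q₂) (hne₃ : p₃ ≠ q₃)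
    (hor : ∀ x y : Bool,
      indepOp (rrParam p₁ q₁ x) (rrParam p₂ q₂ y) op = bern (rrParam p₃ q₃ (x || y))) :
    p₁ = 1 / 2 := by
  have hTT : indepOp p₁ p₂ op true = p₃ := congrFun (hor true true) true
  have hTF : indepOp p₁ q₂ op true = p₃ := congrFun (hor true false) true
  have hFT : indepOp q₁ p₂ op true = p₃ := congrFun (hor false true) true
  have hFF : indepOp q₁ q₂ op true = q₃ := congrFun (hor false false) true
  have hslope_p₁ :
      opTable op false true - opTable op false false + opInteraction op * p₁ = 0 := by
    have h := indepOp_apply_true_sub_right op p₁ p₂ q₂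
    rw [hTT, hTF, sub_self] at h
    exact (mul_eq_zero.mp h.symm).resolve_right (sub_ne_zero.mpr hne₂)
  have hmixed : q₃ - p₃ = opInteraction op * (q₁ - p₁) * (q₂ - p₂) := by
    rw [← hFF, ← hFT, indepOp_apply_true_sub_right]
    linear_combination (q₂ - p₂) * hslope_p₁
  have hδ : opInteraction op ≠ 0 := by
    intro hδ
    rw [hδ, zero_mul, zero_mul, sub_eq_zero] at hmixed
    exact hne₃ hmixed.symm
  exact eq_half_of_opInteraction_ne_zero op hp₁ hδ hslope_p₁

end MergeImpossibility

open MergeImpossibility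

lemma rrParam_not (p q : ℝ) (x : Bool) : rrParam p q (!x) = rrParam q p x := by
  cases x <;> rfl

theorem stmt6_general (p₁ q₁ p₂ q₂ p₃ q₃ p₄ q₄ : ℝ)
    (hp₁ : p₁ ∈ Set.Ioo (0 : ℝ) 1) (hq₁ : q₁ ∈ Set.Ioo (0 : ℝ) 1)
    (hne₁ : p₁ ≠ q₁) (hne₂ : p₂ ≠ q₂) (hne₃ : p₃ ≠ q₃) (hne₄ : p₄ ≠ q₄)
    (op bop : Bool → Bool → Bool)
    (hor : ∀ x y : Bool,
      indepOp (rrParam p₁ q₁ x) (rrParam p₂ q₂ y) op = bern (rrParam p₃ q₃ (x || y)))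
    (hand : ∀ x y : Bool,
      indepOp (rrParam p₁ q₁ x) (rrParam p₂ q₂ y) bop = bern (rrParam p₄ q₄ (x && y))) :
    False := by
  have hand_not : ∀ x y : Bool,
      indepOp (rrParam q₁ p₁ x) (rrParam q₂ p₂ y) bop = bern (rrParam q₄ p₄ (x || y)) := by
    intro x y
    simpa only [rrParam_not, ← Bool.not_or] using hand (!x) (!y)
  have hp₁_half : p₁ = 1 / 2 := eq_half_of_orMerge hp₁ hne₂ hne₃ hor
  have hq₁_half : q₁ = 1 / 2 := eq_half_of_orMerge hq₁ hne₂.symm hne₄.symm hand_not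
  exact hne₁ (hp₁_half.trans hq₁_half.symm)

theorem stmt6 (p₁ q₁ p₂ q₂ p₃ q₃ p₄ q₄ : ℝ)
    (hp₁ : p₁ ∈ Set.Ioo (0 : ℝ) 1) (hq₁ : q₁ ∈ Set.Ioo (0 : ℝ) 1)
    (hp₂ : p₂ ∈ Set.Ioo (0 : ℝ) 1) (hq₂ : q₂ ∈ Set.Ioo (0 : ℝ) 1)
    (hp₃ : p₃ ∈ Set.Ioo (0 : ℝ) 1) (hq₃ : q₃ ∈ Set.Ioo (0 : ℝ) 1)
    (hp₄ : p₄ ∈ Set.Ioo (0 : ℝ) 1) (hq₄ : q₄ ∈ Set.Ioo (0 : ℝ) 1)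
    (hne₁ : p₁ ≠ q₁) (hne₂ : p₂ ≠ q₂) (hne₃ : p₃ ≠ q₃) (hne₄ : p₄ ≠ q₄)
    (op bop : Bool → Bool → Bool)
    (hsym : ∀ a b, op a b = op b a) (hsym' : ∀ a b, bop a b = bop b a)
    (hor : ∀ x y : Bool,
      indepOp (rrParam p₁ q₁ x) (rrParam p₂ q₂ y) op = bern (rrParam p₃ q₃ (x || y)))
    (hand : ∀ x y : Bool,
      indepOp (rrParam p₁ q₁ x) (rrParam p₂ q₂ y) bop = bern (rrParam p₄ q₄ (x && y))) :
    False :=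
  stmt6_general p₁ q₁ p₂ q₂ p₃ q₃ p₄ q₄ hp₁ hq₁ hne₁ hne₂ hne₃ hne₄ op bop hor hand
end

section
/- Let ε₁, ε₂ > 0 and p_i = e^{ε_i}/(e^{ε_i}+1). For independent X ~ Bernoulli(p₁) and Y ~ Bernoulli(p₂), Pr(X ⊕ Y = 1 when the xor of the noiseless bits is 1) equals p* = e^{ε*}/(e^{ε*}+1) where ε* = log((1 + e^{ε₁+ε₂})/(e^{ε₁} + e^{ε₂})). Concretely: p₁p₂ + (1−p₁)(1−p₂) = e^{ε*}/(e^{ε*}+1) and p₁(1−p₂) + p₂(1−p₁) = 1/(e^{ε*}+1). -/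
/-!
Write `a = e^{ε₁}`, `b = e^{ε₂}`, so that `pᵢ` is the probability `x / (x + 1)` attached to the
odds `x`. Both xor probabilities are rational identities in `a, b` showing that the merged
mechanism has odds `(1 + a b) / (a + b)`, and these odds exceed `1` because
`1 + a b - (a + b) = (a - 1) (b - 1)`.
-/

open Real

section XorOdds

variable {K : Type*} [Field K] {a b : K}

theorem one_add_mul_div_add_add_one (hab : a + b ≠ 0) :
    (1 + a * b) / (a + b) + 1 = (a + 1) * (b + 1) / (a + b) := by
  field_simp
  ring

theorem xor_eq_zero_prob (ha : a + 1 ≠ 0) (hb : b + 1 ≠ 0) (hab : a + b ≠ 0) :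
    a / (a + 1) * (b / (b + 1)) + (1 - a / (a + 1)) * (1 - b / (b + 1)) =
      (1 + a * b) / (a + b) / ((1 + a * b) / (a + b) + 1) := by
  rw [one_add_mul_div_add_add_one hab]
  field_simp
  ring

theorem xor_eq_one_prob (ha : a + 1 ≠ 0) (hb : b + 1 ≠ 0) (hab : a + b ≠ 0) :
    a / (a + 1) * (1 - b / (b + 1)) + b / (b + 1) * (1 - a / (a + 1)) =
      1 / ((1 + a * b) / (a + b) + 1) := by
  rw [one_add_mul_div_add_add_one hab]
  field_simp
  ring

end XorOdds

theorem one_lt_xor_odds {K : Type*} [Field K] [LinearOrder K] [IsStrictOrderedRing K] {a b : K}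
    (ha : 1 < a) (hb : 1 < b) : 1 < (1 + a * b) / (a + b) := by
  rw [one_lt_div (by linarith)]
  nlinarith [mul_pos (sub_pos.2 ha) (sub_pos.2 hb)]

theorem stmt8 (ε₁ ε₂ : ℝ) (h₁ : 0 < ε₁) (h₂ : 0 < ε₂) :
    (Real.exp ε₁ / (Real.exp ε₁ + 1)) * (Real.exp ε₂ / (Real.exp ε₂ + 1)) +
        (1 - Real.exp ε₁ / (Real.exp ε₁ + 1)) * (1 - Real.exp ε₂ / (Real.exp ε₂ + 1)) =
      Real.exp (Real.log ((1 + Real.exp (ε₁ + ε₂)) / (Real.exp ε₁ + Real.exp ε₂))) /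
        (Real.exp (Real.log ((1 + Real.exp (ε₁ + ε₂)) / (Real.exp ε₁ + Real.exp ε₂))) + 1) ∧
    (Real.exp ε₁ / (Real.exp ε₁ + 1)) * (1 - Real.exp ε₂ / (Real.exp ε₂ + 1)) +
        (Real.exp ε₂ / (Real.exp ε₂ + 1)) * (1 - Real.exp ε₁ / (Real.exp ε₁ + 1)) =
      1 / (Real.exp (Real.log ((1 + Real.exp (ε₁ + ε₂)) / (Real.exp ε₁ + Real.exp ε₂))) + 1) ∧
    0 < Real.log ((1 + Real.exp (ε₁ + ε₂)) / (Real.exp ε₁ + Real.exp ε₂)) := by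
  have ha : 1 < exp ε₁ := one_lt_exp_iff.2 h₁
  have hb : 1 < exp ε₂ := one_lt_exp_iff.2 h₂
  have h_odds := one_lt_xor_odds ha hb
  have ha₀ : exp ε₁ + 1 ≠ 0 := by positivity
  have hb₀ : exp ε₂ + 1 ≠ 0 := by positivity
  have hab₀ : exp ε₁ + exp ε₂ ≠ 0 := by positivity
  rw [exp_add, exp_log (by linarith)]
  exact ⟨xor_eq_zero_prob ha₀ hb₀ hab₀, xor_eq_one_prob ha₀ hb₀ hab₀, log_pos h_odds⟩
end

section
/- Let p, q with 0 < q < p < 1 and γ ∈ (0,1). Define φ(m) = γ^m log(γ) · ((1 − a_n)/(1 − a_m) − a_n/a_m) where a_m = p − (p−q)γ^m for real m > 0 and fixed n > 0. Then φ(n) = 0, φ(m) > 0 for 0 < m < n, and φ(m) < 0 for m > n. -/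
/-!
Over a common denominator the bracket is `(a m - a n) / (a m * (1 - a m))`. For `m > 0` the
marginal `a m` lies in `(q, p) ⊆ (0, 1)`, so the denominator is positive, and `a` is strictly
increasing because `γ ^ m` is strictly decreasing. Hence the bracket has the sign of `m - n`,
and the prefactor `γ ^ m * log γ` is negative.
-/

open Real

lemma div_one_sub_sub_div_eq {b x : ℝ} (hx0 : x ≠ 0) (hx1 : x ≠ 1) :
    (1 - b) / (1 - x) - b / x = (x - b) / (x * (1 - x)) := by
  have : 1 - x ≠ 0 := sub_ne_zero.2 hx1.symm
  field_simp
  ring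

lemma rpow_mul_log_neg {γ : ℝ} (hγ0 : 0 < γ) (hγ1 : γ < 1) (m : ℝ) : γ ^ m * log γ < 0 :=
  mul_neg_of_pos_of_neg (rpow_pos_of_pos hγ0 m) (log_neg hγ0 hγ1)

lemma strictMono_sub_mul_rpow {p c γ : ℝ} (hc : 0 < c) (hγ0 : 0 < γ) (hγ1 : γ < 1) :
    StrictMono fun m : ℝ => p - c * γ ^ m := fun _ _ h => by
  have := mul_lt_mul_of_pos_left (strictAnti_rpow_of_base_lt_one hγ0 hγ1 h) hc
  dsimp only
  linarith

lemma sub_sub_mul_rpow_mem_Ioo {p q γ m : ℝ} (hqp : q < p) (hγ0 : 0 < γ) (hγ1 : γ < 1)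
    (hm : 0 < m) : p - (p - q) * γ ^ m ∈ Set.Ioo q p := by
  have h0 := rpow_pos_of_pos hγ0 m
  have h1 := rpow_lt_one hγ0.le hγ1 hm
  constructor <;> nlinarith

theorem stmt19 (p q γ n : ℝ) (hq0 : 0 < q) (hqp : q < p) (hp1 : p < 1)
    (hγ0 : 0 < γ) (hγ1 : γ < 1) (hn : 0 < n) :
    let a : ℝ → ℝ := fun m => p - (p - q) * γ ^ m
    let φ : ℝ → ℝ := fun m =>
      γ ^ m * Real.log γ * ((1 - a n) / (1 - a m) - a n / a m)
    φ n = 0 ∧ (∀ m : ℝ, 0 < m → m < n → 0 < φ m) ∧ (∀ m : ℝ, n < m → φ m < 0) := by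
  intro a φ
  have ha : StrictMono a := strictMono_sub_mul_rpow (sub_pos.2 hqp) hγ0 hγ1
  have ha01 : ∀ m, 0 < m → 0 < a m ∧ a m < 1 := fun m hm => by
    obtain ⟨hqa, hap⟩ := sub_sub_mul_rpow_mem_Ioo hqp hγ0 hγ1 hm
    exact ⟨hq0.trans hqa, hap.trans hp1⟩
  have hφ : ∀ m, 0 < m → φ m = γ ^ m * log γ * ((a m - a n) / (a m * (1 - a m))) :=
    fun m hm => congrArg _ (div_one_sub_sub_div_eq (ha01 m hm).1.ne' (ha01 m hm).2.ne)
  have hden : ∀ m, 0 < m → 0 < a m * (1 - a m) :=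
    fun m hm => mul_pos (ha01 m hm).1 (sub_pos.2 (ha01 m hm).2)
  refine ⟨by simp [hφ n hn], fun m hm hmn => ?_, fun m hmn => ?_⟩
  · rw [hφ m hm]
    exact mul_pos_of_neg_of_neg (rpow_mul_log_neg hγ0 hγ1 m)
      (div_neg_of_neg_of_pos (sub_neg.2 (ha hmn)) (hden m hm))
  · have hm := hn.trans hmn
    rw [hφ m hm]
    exact mul_neg_of_neg_of_pos (rpow_mul_log_neg hγ0 hγ1 m)
      (div_pos (sub_pos.2 (ha hmn)) (hden m hm))
end
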